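/- MMAP decomposition: let Q, E, and M = Λ∖(Q∪E) partition the variables, and suppose the tensor set 𝒯 is partitioned into blocks S₁,…,S_r such that for every variable v ∈ M, all tensors whose scope contains v lie in a single block. Then max over q ∈ dom(Q) of Σ_{m ∈ dom(M)} Π_{T∈𝒯} T(q, m, e) equals max over q of Π_i Sᵢ'(q restricted to Λᵢ ∩ Q), where Sᵢ' = con(Λᵢ, (Sᵢ)_e, Λᵢ ∩ Q) and Λᵢ is the variable set of block Sᵢ. -/

import Mathlib

/-!
The two objectives agree before maximizing over `q`. Summing out the marginalized variables
`M` is a sum over configurations agreeing with `q` outside `M`. Since every variable of `M`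
lies in the scope of exactly one block, `M` splits into the disjoint pieces `M ∩ Λᵢ`, and the
tensors of block `i` do not see the pieces of the other blocks; so the sum over `M` of the
product of the blocks factors as the product over `i` of the sums over `M ∩ Λᵢ`. These are the
contractions `Sᵢ'`, as `(Λᵢ ∖ E) ∖ (Λᵢ ∩ Q) = M ∩ Λᵢ`.
-/

variable {ι : Type} [Fintype ι] [DecidableEq ι]
variable {D : ι → Type} [∀ i, Fintype (D i)] [∀ i, DecidableEq (D i)]

/-- Tensor network contraction `con(Λ, 𝒯, V₀)` over the variable set `Λ`. -/
noncomputable def con (Λ : Finset ι) (𝒯 : List ((∀ i, D i) → ℝ)) (V₀ : Finset ι)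
    (x : ∀ i, D i) : ℝ :=
  ∑ y : ∀ i, D i,
    if ∀ i, i ∉ Λ \ V₀ → y i = x i then (𝒯.map fun T => T y).prod else 0

/-- Slicing a tensor at the evidence `E = e`. -/
def sliceAt (E : Finset ι) (e : ∀ i, D i) (T : (∀ i, D i) → ℝ) : (∀ i, D i) → ℝ :=
  fun y => T fun i => if i ∈ E then e i else y i

/-- A tensor `T` has scope (at most) `S` if it depends only on the coordinates in `S`. -/
def TensorDependsOn (T : (∀ i, D i) → ℝ) (S : Finset ι) : Prop :=
  ∀ x y : ∀ i, D i, (∀ i ∈ S, x i = y i) → T x = T y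

theorem TensorDependsOn.mono {ι : Type} {D : ι → Type} {T : (∀ i, D i) → ℝ} {S S' : Finset ι}
    (h : TensorDependsOn T S) (hSS' : S ⊆ S') : TensorDependsOn T S' :=
  fun x y hxy => h x y fun i hi => hxy i (hSS' hi)

theorem TensorDependsOn.sliceAt {ι : Type} [DecidableEq ι] {D : ι → Type}
    {T : (∀ i, D i) → ℝ} {S : Finset ι} (h : TensorDependsOn T S) (E : Finset ι)
    (e : ∀ i, D i) : TensorDependsOn (_root_.sliceAt E e T) (S \ E) := by
  intro x y hxy
  refine h _ _ fun i hi => ?_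
  by_cases hiE : i ∈ E
  · simp [hiE]
  · simp [hiE, hxy i (Finset.mem_sdiff.2 ⟨hi, hiE⟩)]

theorem TensorDependsOn.list_prod {ι : Type} {D : ι → Type} {α : Type*} {l : List α}
    {f : α → (∀ i, D i) → ℝ} {S : Finset ι} (h : ∀ a ∈ l, TensorDependsOn (f a) S) :
    TensorDependsOn (fun y => (l.map fun a => f a y).prod) S :=
  fun x y hxy => congrArg List.prod (List.map_congr_left fun a ha => h a ha x y hxy)

theorem TensorDependsOn.finset_prod {ι : Type} [DecidableEq ι] {D : ι → Type} {α : Type*}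
    [DecidableEq α] {s : Finset α} {f : α → (∀ i, D i) → ℝ} {S : α → Finset ι}
    (h : ∀ a ∈ s, TensorDependsOn (f a) (S a)) :
    TensorDependsOn (fun y => ∏ a ∈ s, f a y) (s.biUnion S) :=
  fun x y hxy => Finset.prod_congr rfl fun a ha =>
    h a ha x y fun i hi => hxy i (Finset.mem_biUnion.2 ⟨a, ha, hi⟩)

noncomputable def sumOut (A : Finset ι) (f : (∀ i, D i) → ℝ) (x : ∀ i, D i) : ℝ :=
  ∑ y : ∀ i, D i, if ∀ i, i ∉ A → y i = x i then f y else 0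

theorem con_eq_sumOut (Λ : Finset ι) (𝒯 : List ((∀ i, D i) → ℝ)) (V₀ : Finset ι) :
    con Λ 𝒯 V₀ = sumOut (Λ \ V₀) fun y => (𝒯.map fun T => T y).prod :=
  rfl

theorem sumOut_empty (f : (∀ i, D i) → ℝ) (x : ∀ i, D i) : sumOut ∅ f x = f x := by
  simp [sumOut, ← funext_iff]

theorem sumOut_union {A B : Finset ι} (hAB : Disjoint A B) {g h : (∀ i, D i) → ℝ}
    (hg : TensorDependsOn g Bᶜ) (hh : TensorDependsOn h Aᶜ) (x : ∀ i, D i) :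
    sumOut (A ∪ B) (fun y => g y * h y) x = sumOut A g x * sumOut B h x := by
  simp only [sumOut, ← Finset.sum_filter, Finset.sum_mul_sum, ← Finset.sum_product']
  refine Finset.sum_nbij' (fun y => (A.piecewise y x, B.piecewise y x))
    (fun p => A.piecewise p.1 p.2) ?_ ?_ ?_ ?_ ?_
  · intro y hy
    simp_all [Finset.mem_filter, Finset.piecewise]
  · intro p hp
    simp_all [Finset.mem_filter, Finset.piecewise]
  · intro y hy
    simp only [Finset.mem_filter, Finset.mem_univ, true_and, Finset.mem_union, not_or] at hy
    ext i
    by_cases hA : i ∈ A <;> by_cases hB : i ∈ B <;> simp [hA, hB, hy]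
  · rintro ⟨p₁, p₂⟩ hp
    simp only [Finset.mem_product, Finset.mem_filter, Finset.mem_univ, true_and] at hp
    ext i
    · by_cases hA : i ∈ A <;> simp [hA, hp.1]
    · by_cases hB : i ∈ B
      · simp [hB, Finset.disjoint_right.1 hAB hB]
      · simp [hB, hp.2]
  · intro y hy
    simp only [Finset.mem_filter, Finset.mem_univ, true_and, Finset.mem_union, not_or] at hy
    congr 1
    · refine hg _ _ fun i hi => ?_
      by_cases hA : i ∈ A <;> simp_all
    · refine hh _ _ fun i hi => ?_
      by_cases hB : i ∈ B <;> simp_all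

theorem sumOut_biUnion {α : Type*} [DecidableEq α] {s : Finset α} {A S : α → Finset ι}
    {f : α → (∀ i, D i) → ℝ} (hf : ∀ a ∈ s, TensorDependsOn (f a) (S a))
    (hAS : ∀ a ∈ s, A a ⊆ S a) (hSA : ∀ a ∈ s, ∀ b ∈ s, a ≠ b → Disjoint (S a) (A b))
    (x : ∀ i, D i) :
    sumOut (s.biUnion A) (fun y => ∏ a ∈ s, f a y) x = ∏ a ∈ s, sumOut (A a) (f a) x := by
  induction s using Finset.induction_on with
  | empty => simp [sumOut_empty]
  | insert a s has ih =>
    have hne : ∀ b ∈ s, a ≠ b := fun b hb hab => has (hab ▸ hb)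
    have hSa : Disjoint (S a) (s.biUnion A) := (Finset.disjoint_biUnion_right _ _ _).2
      fun b hb => hSA a (by simp) b (by simp [hb]) (hne b hb)
    have hSs : Disjoint (s.biUnion S) (A a) := (Finset.disjoint_biUnion_left _ _ _).2
      fun b hb => hSA b (by simp [hb]) a (by simp) (hne b hb).symm
    simp only [Finset.biUnion_insert, Finset.prod_insert has]
    rw [sumOut_union (hSa.mono_left (hAS a (by simp)))
      ((hf a (by simp)).mono (Finset.subset_compl_iff_disjoint_right.2 hSa))
      ((TensorDependsOn.finset_prod fun b hb => hf b (by simp [hb])).mono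
        (Finset.subset_compl_iff_disjoint_right.2 hSs)),
      ih (fun b hb => hf b (by simp [hb])) (fun b hb => hAS b (by simp [hb]))
        (fun b hb c hc => hSA b (by simp [hb]) c (by simp [hc]))]

theorem sumOut_list_prod {α : Type*} (L : List α) {A S : α → Finset ι}
    {f : α → (∀ i, D i) → ℝ} (hf : ∀ a ∈ L, TensorDependsOn (f a) (S a))
    (hAS : ∀ a ∈ L, A a ⊆ S a)
    (hSA : ∀ k l : Fin L.length, k ≠ l → Disjoint (S (L.get k)) (A (L.get l)))
    {U : Finset ι} (hU : ∀ i, i ∈ U ↔ ∃ a ∈ L, i ∈ A a) (x : ∀ i, D i) :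
    sumOut U (fun y => (L.map fun a => f a y).prod) x =
      (L.map fun a => sumOut (A a) (f a) x).prod := by
  have hU' : U = Finset.univ.biUnion fun k => A (L.get k) := by
    ext i
    simp only [hU, Finset.mem_biUnion, Finset.mem_univ, true_and, List.mem_iff_get]
    exact ⟨fun ⟨_, ⟨k, hk⟩, hi⟩ => ⟨k, hk ▸ hi⟩, fun ⟨k, hi⟩ => ⟨_, ⟨k, rfl⟩, hi⟩⟩
  simp only [hU', List.get_eq_getElem, ← Fin.prod_univ_fun_getElem L]
  exact sumOut_biUnion (fun k _ => hf _ (List.getElem_mem _))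
    (fun k _ => hAS _ (List.getElem_mem _)) (fun k _ l _ hkl => by simpa using hSA k l hkl) x

theorem mmap_decomposition_general [Nonempty (∀ i, D i)] (Q E : Finset ι)
    (e : ∀ i, D i)
    (𝒮 : List (Finset ι × List ((∀ i, D i) → ℝ)))
    (hdep : ∀ P ∈ 𝒮, ∀ T ∈ P.2, TensorDependsOn T P.1)
    (hcover : ∀ v : ι, v ∉ Q → v ∉ E → ∃ P ∈ 𝒮, v ∈ P.1)
    (huniq : ∀ v : ι, v ∉ Q → v ∉ E →
      ∀ i j : Fin 𝒮.length, v ∈ (𝒮.get i).1 → v ∈ (𝒮.get j).1 → i = j) :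
    (Finset.univ : Finset (∀ i, D i)).sup' Finset.univ_nonempty
        (fun x => con (Finset.univ \ E)
          (((𝒮.map Prod.snd).flatten).map (sliceAt E e)) Q x) =
      (Finset.univ : Finset (∀ i, D i)).sup' Finset.univ_nonempty
        (fun x =>
          (𝒮.map fun P => con (P.1 \ E) (P.2.map (sliceAt E e)) (P.1 ∩ Q) x).prod) := by
  refine Finset.sup'_congr _ rfl fun x _ => ?_
  have hblock : ∀ P : Finset ι × List ((∀ i, D i) → ℝ),
      (P.1 \ E) \ (P.1 ∩ Q) = ((Finset.univ \ E) \ Q) ∩ P.1 := by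
    intro P
    ext v
    simp only [Finset.mem_inter, Finset.mem_sdiff, Finset.mem_univ, true_and]
    tauto
  simp only [con_eq_sumOut, hblock, List.map_flatten, List.prod_flatten, List.map_map,
    Function.comp_def]
  refine sumOut_list_prod 𝒮 (S := fun P => P.1 \ E) (fun P hP => ?_) (fun P _ v => ?_)
    (fun k l hkl => ?_) (fun v => ?_) x
  · exact TensorDependsOn.list_prod fun T hT => (hdep P hP T hT).sliceAt E e
  · simp only [Finset.mem_inter, Finset.mem_sdiff, Finset.mem_univ, true_and]
    tauto
  · refine Finset.disjoint_left.2 fun v hvk hvl => hkl ?_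
    simp only [Finset.mem_inter, Finset.mem_sdiff, Finset.mem_univ, true_and] at hvk hvl
    exact huniq v hvl.1.2 hvl.1.1 k l hvk.1 hvl.2
  · simp only [Finset.mem_inter, Finset.mem_sdiff, Finset.mem_univ, true_and]
    exact ⟨fun hv => (hcover v hv.2 hv.1).imp fun P ⟨hP, hvP⟩ => ⟨hP, hv, hvP⟩,
      fun ⟨_, _, hv, _⟩ => hv⟩

/-- MMAP decomposition: the MMAP objective `max_q Σ_m Π_{T∈𝒯} T(q,m,e)` equals
`max_q Π_i Sᵢ'(q|_{Λᵢ∩Q})` with `Sᵢ' = con(Λᵢ∖E, (Sᵢ)_e, Λᵢ∩Q)`, where the blocks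
`𝒮` pair each variable set `Λᵢ` with its list of tensors. -/
theorem mmap_decomposition [Nonempty (∀ i, D i)] (Q E : Finset ι)
    (hQE : Disjoint Q E) (e : ∀ i, D i)
    (𝒮 : List (Finset ι × List ((∀ i, D i) → ℝ)))
    (hdep : ∀ P ∈ 𝒮, ∀ T ∈ P.2, TensorDependsOn T P.1)
    (hnn : ∀ P ∈ 𝒮, ∀ T ∈ P.2, ∀ y, 0 ≤ T y)
    (hcover : ∀ v : ι, v ∉ Q → v ∉ E → ∃ P ∈ 𝒮, v ∈ P.1)
    (huniq : ∀ v : ι, v ∉ Q → v ∉ E →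
      ∀ i j : Fin 𝒮.length, v ∈ (𝒮.get i).1 → v ∈ (𝒮.get j).1 → i = j) :
    (Finset.univ : Finset (∀ i, D i)).sup' Finset.univ_nonempty
        (fun x => con (Finset.univ \ E)
          (((𝒮.map Prod.snd).flatten).map (sliceAt E e)) Q x) =
      (Finset.univ : Finset (∀ i, D i)).sup' Finset.univ_nonempty
        (fun x =>
          (𝒮.map fun P => con (P.1 \ E) (P.2.map (sliceAt E e)) (P.1 ∩ Q) x).prod) :=
  mmap_decomposition_general Q E e 𝒮 hdep hcover huniq
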